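/- Suppose a closed surface S has a cell decomposition into polygons with an angle structure such that every 2-cell has total interior angle sum equal to (n−2)π minus its combinatorial area A(c), the angle sum around every vertex is 2π, and every triangle has combinatorial area 0 while every quadrilateral q has combinatorial area 2α(q) for a given function α. Then χ(S) = −(1/π) · Σ_q α(q), where the sum is over all quadrilateral 2-cells of S. -/
import Mathlib


open Finset

/-- Combinatorial Gauss–Bonnet for a closed normal surface built from triangles
and quadrilaterals: if every triangle has angle sum `π` (combinatorial area `0`),
every quadrilateral `q` has angle sum `2π − 2α(q)` (combinatorial area `2α(q)`),
the angle sum around every vertex is `2π`, the cells glue along edges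
(`Σ_c (#corners of c) = 2E`), and `χ = V − E + F`, then
`χ(S) = −(1/π) · Σ_{quadrilaterals q} α(q)`. -/
theorem stmt7 {Cell Vertex Corner : Type*}
    [Fintype Cell] [Fintype Vertex] [Fintype Corner]
    [DecidableEq Cell] [DecidableEq Vertex]
    (cellOf : Corner → Cell) (vertexOf : Corner → Vertex)
    (isQuad : Cell → Prop) [DecidablePred isQuad]
    (angle : Corner → ℝ) (α : Cell → ℝ) (E : ℕ) (χ : ℤ)
    (hsides : ∀ c, (univ.filter (fun x => cellOf x = c)).card =
        if isQuad c then 4 else 3)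
    (htri : ∀ c, ¬ isQuad c →
        ∑ x ∈ univ.filter (fun x => cellOf x = c), angle x = Real.pi)
    (hquad : ∀ c, isQuad c →
        ∑ x ∈ univ.filter (fun x => cellOf x = c), angle x = 2 * Real.pi - 2 * α c)
    (hvert : ∀ v, ∑ x ∈ univ.filter (fun x => vertexOf x = v), angle x = 2 * Real.pi)
    (hedges : ∑ c, (univ.filter (fun x => cellOf x = c)).card = 2 * E)
    (hχ : χ = (Fintype.card Vertex : ℤ) - (E : ℤ) + Fintype.card Cell) :
    (χ : ℝ) = -(1 / Real.pi) * ∑ c ∈ univ.filter isQuad, α c := by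

  classical
  set T : ℕ := (univ.filter (fun c => ¬ isQuad c)).card with hT
  set Q : ℕ := (univ.filter isQuad).card with hQ
  set S : ℝ := ∑ c ∈ univ.filter isQuad, α c with hS
  -- total angle via vertices
  have e1 : ∑ x : Corner, angle x = 2 * Real.pi * (Fintype.card Vertex : ℝ) := by
    rw [← Finset.sum_fiberwise univ vertexOf angle]
    simp [hvert, Finset.card_univ, mul_comm]
  -- total angle via cells
  have e2 : ∑ x : Corner, angle x
      = Real.pi * T + (2 * Real.pi) * Q - 2 * S := by
    rw [← Finset.sum_fiberwise univ cellOf angle]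
    rw [← Finset.sum_filter_add_sum_filter_not univ isQuad]
    rw [Finset.sum_congr rfl (fun c hc => hquad c (Finset.mem_filter.1 hc).2),
        Finset.sum_congr rfl (fun c hc => htri c (Finset.mem_filter.1 hc).2)]
    simp [Finset.sum_sub_distrib, Finset.mul_sum, hS]
    ring
  -- edge count
  have e2E : 2 * E = 4 * Q + 3 * T := by
    rw [← hedges]
    rw [Finset.sum_congr rfl (fun c _ => hsides c)]
    rw [Finset.sum_ite, Finset.sum_const, Finset.sum_const]
    simp [hT, hQ, Finset.filter_filter, mul_comm]
  -- face count
  have eF : Fintype.card Cell = Q + T := by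
    simpa [Finset.card_univ] using
      (Finset.card_filter_add_card_filter_not (s := univ) (p := isQuad)).symm
  have e2E' : (2 : ℝ) * E = 4 * Q + 3 * T := by exact_mod_cast e2E
  have eF' : (Fintype.card Cell : ℝ) = Q + T := by exact_mod_cast eF
  have e4 : (χ : ℝ) = (Fintype.card Vertex : ℝ) - E + Fintype.card Cell := by
    exact_mod_cast congrArg (fun z : ℤ => (z : ℝ)) hχ
  have key : Real.pi * χ = -S := by
    linear_combination Real.pi * e4 + (1/2) * e2 - (1/2) * e1
      - (Real.pi/2) * e2E' + Real.pi * eF'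
  have hπ : Real.pi ≠ 0 := Real.pi_ne_zero
  field_simp
  linarith [key]
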